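/- Let ε = (ε_1,…,ε_n) be a random vector in ℝⁿ with E ε_i = 0 for all i, E ε_i ε_j = δ_{ij} (each ε_i square-integrable). Let z, r ∈ ℝⁿ be fixed vectors with ‖z‖ = ‖r‖ = 1 and ⟨z,r⟩ ≠ 1, let ε̂ = ε − ⟨ε, z⟩ z, and define the new residuals ê = U_{z,r} ε̂ = ε̂ − (⟨ε̂, r⟩/(1−⟨z,r⟩))(r − z). Then the covariance matrix of ê is I − r rᵀ, i.e. E ê_i ê_j = δ_{ij} − r_i r_j for all i, j. -/

import Mathlib

/-!
Write `P x = x - ⟪x, z⟫ z` for the projection away from `z` and `U` for the reflection in the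
hyperplane orthogonal to `z - r`, so that `ê = U (P ε)`, `U` is a self-adjoint isometry and
`U z = r`. Isotropy of `ε` means `E ⟪ε, u⟫ ⟪ε, v⟫ = ⟪u, v⟫`; since `ê_i = ⟪ε, P (U eᵢ)⟫`, this gives
`E ê_i ê_j = ⟪P (U eᵢ), P (U eⱼ)⟫ = ⟪U eᵢ, U eⱼ⟫ - ⟪U eᵢ, z⟫ ⟪U eⱼ, z⟫ = δᵢⱼ - rᵢ rⱼ`.
-/

open scoped InnerProductSpace
open MeasureTheory

section InnerProductSpace

variable {E : Type*} [NormedAddCommGroup E] [InnerProductSpace ℝ E]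

/-- The paper's operator `U_{a,b}` is this reflection. -/
theorem reflection_orthogonalComplement_singleton_sub_apply {a b : E} (ha : ‖a‖ = 1)
    (hb : ‖b‖ = 1) (x : E) :
    (ℝ ∙ (a - b))ᗮ.reflection x = x - (⟪a - b, x⟫_ℝ / (1 - ⟪a, b⟫_ℝ)) • (a - b) := by
  have hnorm : ‖a - b‖ ^ 2 = 2 * (1 - ⟪a, b⟫_ℝ) := by
    rw [norm_sub_sq_real, ha, hb]; ring
  rw [Submodule.reflection_orthogonal_apply, Submodule.reflection_singleton_apply,
    RCLike.ofReal_real_eq_id, id, hnorm, neg_sub, two_smul, ← add_smul,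
    div_mul_eq_div_div_swap, add_halves]

theorem inner_sub_inner_smul_left_eq_right (x y z : E) :
    ⟪x - ⟪x, z⟫_ℝ • z, y⟫_ℝ = ⟪x, y - ⟪y, z⟫_ℝ • z⟫_ℝ := by
  simp only [inner_sub_left, inner_sub_right, real_inner_smul_left, real_inner_smul_right,
    real_inner_comm z]
  ring

theorem inner_sub_inner_smul_of_norm_eq_one {z : E} (hz : ‖z‖ = 1) (x y : E) :
    ⟪x - ⟪x, z⟫_ℝ • z, y - ⟪y, z⟫_ℝ • z⟫_ℝ = ⟪x, y⟫_ℝ - ⟪x, z⟫_ℝ * ⟪y, z⟫_ℝ := by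
  simp only [inner_sub_left, inner_sub_right, real_inner_smul_left, real_inner_smul_right,
    real_inner_self_eq_norm_sq, hz, real_inner_comm z]
  ring

end InnerProductSpace

theorem integral_inner_mul_inner_of_isotropic {Ω ι : Type*} [MeasurableSpace Ω] [Fintype ι]
    [DecidableEq ι] {μ : Measure Ω} {ε : Ω → EuclideanSpace ℝ ι}
    (hL2 : ∀ i, MemLp (fun ω => ε ω i) 2 μ)
    (hcov : ∀ i j, ∫ ω, ε ω i * ε ω j ∂μ = if i = j then 1 else 0) (u v : EuclideanSpace ℝ ι) :
    ∫ ω, ⟪ε ω, u⟫_ℝ * ⟪ε ω, v⟫_ℝ ∂μ = ⟪u, v⟫_ℝ := by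
  have hint (i j : ι) : Integrable (fun ω => ε ω i * ε ω j) μ := (hL2 i).integrable_mul (hL2 j)
  have hexpand (ω : Ω) :
      ⟪ε ω, u⟫_ℝ * ⟪ε ω, v⟫_ℝ = ∑ i, ∑ j, u i * v j * (ε ω i * ε ω j) := by
    simp only [PiLp.inner_apply, RCLike.inner_apply, conj_trivial, Finset.sum_mul_sum]
    exact Finset.sum_congr rfl fun i _ => Finset.sum_congr rfl fun j _ => by ring
  simp_rw [hexpand]
  rw [integral_finsetSum _ fun i _ => integrable_finsetSum _ fun j _ => (hint i j).const_mul _]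
  simp_rw [integral_finsetSum _ fun j _ => (hint _ j).const_mul _, integral_const_mul, hcov]
  simp [PiLp.inner_apply, mul_comm]

theorem covariance_of_rotated_residuals_general {Ω : Type*} [MeasurableSpace Ω]
    (μ : Measure Ω) {n : ℕ}
    (ε : Ω → EuclideanSpace ℝ (Fin n))
    (hL2 : ∀ i, MemLp (fun ω => ε ω i) 2 μ)
    (hcov : ∀ i j, ∫ ω, ε ω i * ε ω j ∂μ = if i = j then 1 else 0)
    (z r : EuclideanSpace ℝ (Fin n)) (hz : ‖z‖ = 1) (hr : ‖r‖ = 1)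
    (εhat : Ω → EuclideanSpace ℝ (Fin n))
    (hεhat : ∀ ω, εhat ω = ε ω - ⟪ε ω, z⟫_ℝ • z)
    (ehat : Ω → EuclideanSpace ℝ (Fin n))
    (hehat : ∀ ω, ehat ω = εhat ω - (⟪εhat ω, r⟫_ℝ / (1 - ⟪z, r⟫_ℝ)) • (r - z)) :
    ∀ i j, ∫ ω, ehat ω i * ehat ω j ∂μ = (if i = j then 1 else 0) - r i * r j := by
  set U := (ℝ ∙ (z - r))ᗮ.reflection
  have hUz : U z = r := Submodule.reflection_sub (hz.trans hr.symm)
  have hU_selfAdjoint (x y) : ⟪U x, y⟫_ℝ = ⟪x, U y⟫_ℝ := U.inner_map_eq_flip x y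
  have hehat_eq (ω) : ehat ω = U (εhat ω) := by
    have hperp : ⟪εhat ω, z⟫_ℝ = 0 := by
      rw [hεhat, inner_sub_left, real_inner_smul_left, real_inner_self_eq_norm_sq, hz]; ring
    rw [hehat, reflection_orthogonalComplement_singleton_sub_apply hz hr, inner_sub_left,
      real_inner_comm (εhat ω) z, real_inner_comm (εhat ω) r, hperp]
    module
  have hcoord (ω) (k) : ehat ω k = ⟪ε ω, U (EuclideanSpace.single k 1)
      - ⟪U (EuclideanSpace.single k 1), z⟫_ℝ • z⟫_ℝ := by
    rw [← inner_sub_inner_smul_left_eq_right, ← hεhat, ← hU_selfAdjoint, ← hehat_eq,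
      EuclideanSpace.inner_single_right]
    simp
  intro i j
  simp_rw [hcoord]
  rw [integral_inner_mul_inner_of_isotropic hL2 hcov, inner_sub_inner_smul_of_norm_eq_one hz,
    U.inner_map_map, hU_selfAdjoint, hU_selfAdjoint, hUz]
  simp [EuclideanSpace.inner_single_left, EuclideanSpace.inner_single_right, eq_comm]

/-- If `ε` is a random vector in ℝⁿ with mean zero and identity covariance
(each coordinate square-integrable), `z, r` are fixed unit vectors with `⟪z,r⟫ ≠ 1`,
`ε̂ = ε − ⟪ε, z⟫ z`, and `ê = U_{z,r} ε̂ = ε̂ − (⟪ε̂, r⟫/(1−⟪z,r⟫)) (r − z)`, then the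
covariance matrix of `ê` is `I − r rᵀ`. -/
theorem covariance_of_rotated_residuals {Ω : Type*} [MeasurableSpace Ω]
    (μ : Measure Ω) [IsProbabilityMeasure μ] {n : ℕ}
    (ε : Ω → EuclideanSpace ℝ (Fin n))
    (hL2 : ∀ i, MemLp (fun ω => ε ω i) 2 μ)
    (hmean : ∀ i, ∫ ω, ε ω i ∂μ = 0)
    (hcov : ∀ i j, ∫ ω, ε ω i * ε ω j ∂μ = if i = j then 1 else 0)
    (z r : EuclideanSpace ℝ (Fin n)) (hz : ‖z‖ = 1) (hr : ‖r‖ = 1)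
    (hzr : ⟪z, r⟫_ℝ ≠ 1)
    (εhat : Ω → EuclideanSpace ℝ (Fin n))
    (hεhat : ∀ ω, εhat ω = ε ω - ⟪ε ω, z⟫_ℝ • z)
    (ehat : Ω → EuclideanSpace ℝ (Fin n))
    (hehat : ∀ ω, ehat ω = εhat ω - (⟪εhat ω, r⟫_ℝ / (1 - ⟪z, r⟫_ℝ)) • (r - z)) :
    ∀ i j, ∫ ω, ehat ω i * ehat ω j ∂μ = (if i = j then 1 else 0) - r i * r j :=
  covariance_of_rotated_residuals_general μ ε hL2 hcov z r hz hr εhat hεhat ehat hehat
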